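/- Let q be a prime power, let m, k be integers with 2 ≤ k ≤ m, let s ∈ {1,...,m} with gcd(s,m)=1, and let α_1,...,α_t be nonzero elements of F_{q^m} with pairwise distinct norms. Let φ be the automorphism x ↦ x^{q^s} of F_{q^m} and φ^{-1} its inverse. For each i define the F_q-subspaces of (F_{q^m})^k: U_i^{-s} = {(x, N_{-s}^1(α_i)·φ^{-1}(x), ..., N_{-s}^{k-1}(α_i)·φ^{-(k-1)}(x)) : x ∈ F_{q^m}}, where N_{-s}^j(α) = ∏_{l=0}^{j-1} φ^{-l}(α), and U_i^{s} = {(x, N_s^1(β_i)·φ(x), ..., N_s^{k-1}(β_i)·φ^{k-1}(x)) : x ∈ F_{q^m}} with β_i = φ^{-(k-2)}(α_i^{-1}). Then the tuples (U_1^{-s},...,U_t^{-s}) and (U_1^{s},...,U_t^{s}) are equivalent. -/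

import Mathlib

open Pointwise

/-- The truncated norm with respect to an endomorphism `ψ`:
`∏_{l=0}^{j-1} ψ^l(α)` (so for `ψ = φ` this is `N_s^j(α)`, and for `ψ = φ⁻¹` it
is `N_{-s}^j(α)`). -/
def truncNormIter {L : Type*} [Field L] (ψ : L → L) (j : ℕ) (α : L) : L :=
  ∏ l ∈ Finset.range j, ψ^[l] α

/-- The norm `N_s(α) = ∏_{i=0}^{m-1} α^{q^{si}}`. -/
def normS (q s m : ℕ) {L : Type*} [Field L] (α : L) : L :=
  ∏ i ∈ Finset.range m, α ^ q ^ (s * i)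

/-- Equivalence of `t`-tuples of subsets of `(F_{q^m})^k`. -/
def sysEquiv {L : Type*} [Field L] {k t : ℕ} (U V : Fin t → Set (Fin k → L)) : Prop :=
  ∃ (A : (Fin k → L) ≃ₗ[L] (Fin k → L)) (γ : Fin t → L) (σ : Equiv.Perm (Fin t)),
    (∀ i, γ i ≠ 0) ∧ ∀ i, U i = γ i • (⇑A '' V (σ i))

/-!
Write `ψ = φ⁻¹`. Reversing the order of the coordinates and substituting `x = φ^{k-1}(y)`
turns the generator `(φ^j(y))_j` of `U_i^s` into `(ψ^j(x))_j`, so `U_i^{-s}` is the image of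
the reversed `U_i^s` under the scalar `γ_i = N_{-s}^{k-1}(α_i)`. What makes the coefficients
match is the telescoping identity `N_{-s}^j(α) = N_{-s}^{k-1}(α) · N_s^{k-1-j}(ψ^{k-2}(α⁻¹))`:
the second factor is the inverse of `∏_{l=j}^{k-2} ψ^l(α)`, read backwards.
-/

section TruncNorm

variable {L : Type*} [Field L] (e : L ≃+* L)

lemma RingEquiv.iterate_apply_iterate_symm_add (a b : ℕ) (y : L) :
    (⇑e)^[a] ((⇑e.symm)^[a + b] y) = (⇑e.symm)^[b] y := by
  rw [Function.iterate_add_apply]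
  exact Function.LeftInverse.iterate (f := e.symm) e.apply_symm_apply a _

lemma RingEquiv.iterate_map_inv₀ (n : ℕ) (x : L) : (⇑e)^[n] x⁻¹ = ((⇑e)^[n] x)⁻¹ := by
  rw [← RingAut.coe_pow, map_inv₀]

lemma RingEquiv.iterate_ne_zero (n : ℕ) {x : L} (hx : x ≠ 0) : (⇑e)^[n] x ≠ 0 := by
  rw [← RingAut.coe_pow]
  exact (map_ne_zero _).mpr hx

lemma truncNormIter_inv (j : ℕ) (α : L) :
    truncNormIter e j α⁻¹ = (truncNormIter e j α)⁻¹ := by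
  simp only [truncNormIter, e.iterate_map_inv₀, Finset.prod_inv_distrib]

lemma truncNormIter_ne_zero (j : ℕ) {α : L} (hα : α ≠ 0) : truncNormIter e j α ≠ 0 :=
  Finset.prod_ne_zero_iff.mpr fun l _ => e.iterate_ne_zero l hα

lemma truncNormIter_sub_iterate_symm {j n : ℕ} (hjn : j ≤ n) (α : L) :
    truncNormIter e (n - j) ((⇑e.symm)^[n - 1] α) =
      ∏ l ∈ Finset.Ico j n, (⇑e.symm)^[l] α := by
  rw [Finset.prod_Ico_eq_prod_range, ← Finset.prod_range_reflect, truncNormIter]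
  refine Finset.prod_congr rfl fun l hl => ?_
  have hl : l < n - j := Finset.mem_range.mp hl
  rw [show n - 1 = l + (j + (n - j - 1 - l)) by omega, e.iterate_apply_iterate_symm_add]

lemma truncNormIter_symm_eq_mul {α : L} (hα : α ≠ 0) {j n : ℕ} (hjn : j ≤ n) :
    truncNormIter e.symm j α =
      truncNormIter e.symm n α * truncNormIter e (n - j) ((⇑e.symm)^[n - 1] α⁻¹) := by
  have htail : ∏ l ∈ Finset.Ico j n, (⇑e.symm)^[l] α ≠ 0 :=
    Finset.prod_ne_zero_iff.mpr fun l _ => e.symm.iterate_ne_zero l hα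
  rw [e.symm.iterate_map_inv₀, truncNormIter_inv, truncNormIter_sub_iterate_symm e hjn,
    truncNormIter, truncNormIter, ← Finset.prod_range_mul_prod_Ico _ hjn,
    mul_inv_cancel_right₀ htail]

end TruncNorm

lemma Set.range_eq_smul_image_range_of_surjective {α β G M : Type*} [SMul G M]
    {f : α → M} {g : β → M} {h : α → β} (hh : Function.Surjective h) (c : G) (A : M → M)
    (hf : ∀ x, f x = c • A (g (h x))) : Set.range f = c • A '' Set.range g := by
  rw [← Set.range_comp, Set.smul_set_range, ← hh.range_comp (fun y => c • (A ∘ g) y)]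
  exact congrArg Set.range (funext hf)

lemma range_truncNormIter_symm_eq_smul_reverse {L : Type*} [Field L] (e : L ≃+* L) {k : ℕ}
    {α : L} (hα : α ≠ 0) :
    (Set.range fun x : L => fun j : Fin k => truncNormIter (⇑e.symm) j α * (⇑e.symm)^[j] x) =
      truncNormIter (⇑e.symm) (k - 1) α •
        (LinearEquiv.funCongrLeft L L Fin.revPerm ''
          Set.range fun y : L => fun j : Fin k =>
            truncNormIter (⇑e) j ((⇑e.symm)^[k - 2] α⁻¹) * (⇑e)^[j] y) := by
  refine Set.range_eq_smul_image_range_of_surjective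
    ((e.symm.bijective.iterate (k - 1)).surjective) _ _ fun x => funext fun j => ?_
  have hj : (j : ℕ) ≤ k - 1 := by omega
  have hcancel : (⇑e)^[k - 1 - j] ((⇑e.symm)^[k - 1] x) = (⇑e.symm)^[j] x := by
    rw [show k - 1 = k - 1 - j + j by omega, Nat.add_sub_cancel, e.iterate_apply_iterate_symm_add]
  simp only [LinearEquiv.funCongrLeft_apply, LinearMap.funLeft_apply, Pi.smul_apply,
    smul_eq_mul, Fin.revPerm_apply, Fin.val_rev]
  rw [show k - (j + 1) = k - 1 - j by omega, hcancel, truncNormIter_symm_eq_mul e hα hj,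
    show k - 1 - 1 = k - 2 by omega, mul_assoc]

theorem stmt5_general (k t : ℕ) (L : Type*) [Field L] (φ : L ≃+* L)
    (α : Fin t → L) (hα : ∀ i, α i ≠ 0) :
    sysEquiv
      (fun i => Set.range fun x : L => fun j : Fin k =>
        truncNormIter (⇑φ.symm) (j : ℕ) (α i) * (⇑φ.symm)^[(j : ℕ)] x)
      (fun i => Set.range fun x : L => fun j : Fin k =>
        truncNormIter (⇑φ) (j : ℕ) ((⇑φ.symm)^[k - 2] (α i)⁻¹) * (⇑φ)^[(j : ℕ)] x) :=
  ⟨LinearEquiv.funCongrLeft L L Fin.revPerm, fun i => truncNormIter (⇑φ.symm) (k - 1) (α i), 1,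
    fun i => truncNormIter_ne_zero φ.symm _ (hα i),
    fun i => range_truncNormIter_symm_eq_smul_reverse φ (hα i)⟩

/-- the linearized Reed–Solomon system with parameter `-s` determined by
`(α_1,…,α_t)` is equivalent to the one with parameter `s` determined by
`(φ^{-(k-2)}(α_1⁻¹),…,φ^{-(k-2)}(α_t⁻¹))`, where `φ : x ↦ x^{q^s}`. -/
theorem stmt5 (q m k s t : ℕ) (hq : IsPrimePow q) (hk2 : 2 ≤ k) (hkm : k ≤ m)
    (hs1 : 1 ≤ s) (hsm' : s ≤ m) (hsm : Nat.gcd s m = 1)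
    (K L : Type*) [Field K] [Fintype K] [Field L] [Fintype L] [Algebra K L]
    (hcardK : Fintype.card K = q) (hrank : Module.finrank K L = m)
    (φ : L ≃+* L) (hφ : ∀ x : L, φ x = x ^ q ^ s)
    (α : Fin t → L) (hα : ∀ i, α i ≠ 0)
    (hαinj : Function.Injective fun i => normS q s m (α i)) :
    sysEquiv
      (fun i => Set.range fun x : L => fun j : Fin k =>
        truncNormIter (⇑φ.symm) (j : ℕ) (α i) * (⇑φ.symm)^[(j : ℕ)] x)
      (fun i => Set.range fun x : L => fun j : Fin k =>
        truncNormIter (⇑φ) (j : ℕ) ((⇑φ.symm)^[k - 2] (α i)⁻¹) * (⇑φ)^[(j : ℕ)] x) :=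
  stmt5_general k t L φ α hα
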